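/- arXiv:2509.19682 — 4 statements merged into one kernel-verified Lean document; each statement's English description precedes it below -/
import Mathlib

section
/- Let η, L > 0, g_0 ≠ 0, β_0 = 0, β_{k+1} = β_k + g_k², α_k = η/√(β_{k+1}). If β_{k+1} < η²L² for all k = 0,…,k_0−1 (with k_0 ≥ 1), then α_k > 1/L for k = 0,…,k_0−1, and the weighted sum satisfies ∑_{k=0}^{k_0−1} α_k g_k² ≤ η³L² / |g_0|. -/
/-!
The accumulator β is nondecreasing, so β_{k+1} ≥ β_1 = g_0² and every stepsize satisfies
α_k ≤ η/|g_0|. Hence the weighted sum is at most (η/|g_0|) ∑ g_k² = (η/|g_0|) β_{k_0}, and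
β_{k_0} < η²L² by hypothesis. The same hypothesis gives √β_{k+1} < ηL, i.e. α_k > 1/L.
-/

open Finset

namespace AdaGradNorm

section Accumulator

variable {β g : ℕ → ℝ}

theorem sum_range_sq_eq (hβ0 : β 0 = 0) (hrec : ∀ k, β (k + 1) = β k + g k ^ 2) (n : ℕ) :
    ∑ k ∈ range n, g k ^ 2 = β n :=
  sum_range_induction _ _ hβ0 n fun k _ => hrec k

theorem monotone (hrec : ∀ k, β (k + 1) = β k + g k ^ 2) : Monotone β :=
  monotone_nat_of_le_succ fun k => by
    rw [hrec k]
    exact le_add_of_nonneg_right (sq_nonneg _)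

theorem sq_le (hβ0 : β 0 = 0) (hrec : ∀ k, β (k + 1) = β k + g k ^ 2) (k : ℕ) :
    g 0 ^ 2 ≤ β (k + 1) := by
  have h := monotone hrec (Nat.le_add_left 1 k)
  rwa [hrec 0, hβ0, zero_add] at h

theorem abs_le_sqrt (hβ0 : β 0 = 0) (hrec : ∀ k, β (k + 1) = β k + g k ^ 2) (k : ℕ) :
    |g 0| ≤ √(β (k + 1)) := by
  rw [← Real.sqrt_sq_eq_abs]
  exact Real.sqrt_le_sqrt (sq_le hβ0 hrec k)

theorem pos (hg0 : g 0 ≠ 0) (hβ0 : β 0 = 0) (hrec : ∀ k, β (k + 1) = β k + g k ^ 2)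
    (k : ℕ) : 0 < β (k + 1) :=
  lt_of_lt_of_le (by positivity) (sq_le hβ0 hrec k)

theorem div_sqrt_le {η : ℝ} (hη : 0 ≤ η) (hg0 : g 0 ≠ 0) (hβ0 : β 0 = 0)
    (hrec : ∀ k, β (k + 1) = β k + g k ^ 2) (k : ℕ) :
    η / √(β (k + 1)) ≤ η / |g 0| :=
  div_le_div_of_nonneg_left hη (abs_pos.mpr hg0) (abs_le_sqrt hβ0 hrec k)

end Accumulator

theorem one_div_lt_div_sqrt {η L b : ℝ} (hη : 0 < η) (hL : 0 < L) (hb : 0 < b)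
    (h : b < η ^ 2 * L ^ 2) : 1 / L < η / √b := by
  have hsqrt : √b < η * L := (Real.sqrt_lt' (by positivity)).mpr (by rwa [mul_pow])
  calc 1 / L = η / (η * L) := by field_simp
    _ < η / √b := div_lt_div_of_pos_left hη (Real.sqrt_pos.mpr hb) hsqrt

end AdaGradNorm

open AdaGradNorm in
theorem stmt_3 (β g : ℕ → ℝ) (η L : ℝ) (hη : 0 < η) (hL : 0 < L)
    (hg0 : g 0 ≠ 0) (hβ0 : β 0 = 0) (hrec : ∀ k, β (k + 1) = β k + (g k) ^ 2)
    (α : ℕ → ℝ) (hα : ∀ k, α k = η / Real.sqrt (β (k + 1)))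
    (k₀ : ℕ) (hk₀ : 1 ≤ k₀) (hβ : ∀ k < k₀, β (k + 1) < η ^ 2 * L ^ 2) :
    (∀ k < k₀, α k > 1 / L) ∧
      ∑ k ∈ Finset.range k₀, α k * (g k) ^ 2 ≤ η ^ 3 * L ^ 2 / |g 0| := by
  refine ⟨fun k hk => hα k ▸ one_div_lt_div_sqrt hη hL (pos hg0 hβ0 hrec k) (hβ k hk), ?_⟩
  have hβk₀ : β k₀ ≤ η ^ 2 * L ^ 2 := by
    obtain ⟨m, rfl⟩ := Nat.exists_eq_add_of_le' hk₀
    exact (hβ m (Nat.lt_succ_self m)).le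
  calc ∑ k ∈ range k₀, α k * g k ^ 2
      ≤ ∑ k ∈ range k₀, η / |g 0| * g k ^ 2 := sum_le_sum fun k _ =>
        mul_le_mul_of_nonneg_right (hα k ▸ div_sqrt_le hη.le hg0 hβ0 hrec k) (sq_nonneg _)
    _ = η / |g 0| * β k₀ := by rw [← mul_sum, sum_range_sq_eq hβ0 hrec]
    _ ≤ η / |g 0| * (η ^ 2 * L ^ 2) := mul_le_mul_of_nonneg_left hβk₀ (by positivity)
    _ = η ^ 3 * L ^ 2 / |g 0| := by ring
end

section
/- Under the AdaGrad-Norm recursion β_0 = 0, β_{k+1} = β_k + g_k², α_k = η/√(β_{k+1}), and the descent inequality f_{k+1} ≤ f_k + (L α_k²/2) g_k², if β_{k+1} < η² L² for k = 0,…,k_0−1, then f_{k_0} ≤ f_0 + η⁴ L³ / (2 g_0²). -/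
lemma le_add_mul_sub_of_succ_sub_le {f β : ℕ → ℝ} {c : ℝ}
    (h : ∀ k, f (k + 1) - f k ≤ c * (β (k + 1) - β k)) (n : ℕ) :
    f n ≤ f 0 + c * (β n - β 0) := by
  have hanti : Antitone fun k => f k - c * β k :=
    antitone_nat_of_succ_le fun k => by linarith [h k]
  linarith [hanti (Nat.zero_le n)]

lemma sq_le_of_sum_sq {β g : ℕ → ℝ} (hβ0 : β 0 = 0)
    (hrec : ∀ k, β (k + 1) = β k + g k ^ 2) (k : ℕ) : g 0 ^ 2 ≤ β (k + 1) := by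
  have hmono : Monotone β :=
    monotone_nat_of_le_succ fun k => by rw [hrec k]; linarith [sq_nonneg (g k)]
  calc g 0 ^ 2 = β 1 := by rw [hrec 0, hβ0, zero_add]
    _ ≤ β (k + 1) := hmono (by omega)

lemma div_sqrt_sq_le {a b : ℝ} (η : ℝ) (ha : 0 < a) (hab : a ≤ b) :
    (η / Real.sqrt b) ^ 2 ≤ η ^ 2 / a := by
  rw [div_pow, Real.sq_sqrt (ha.le.trans hab)]
  exact div_le_div_of_nonneg_left (sq_nonneg η) ha hab

theorem stmt_4_general (β g f : ℕ → ℝ) (η L : ℝ) (hL : 0 < L)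
    (hg0 : g 0 ≠ 0) (hβ0 : β 0 = 0) (hrec : ∀ k, β (k + 1) = β k + (g k) ^ 2)
    (α : ℕ → ℝ) (hα : ∀ k, α k = η / Real.sqrt (β (k + 1)))
    (hdesc : ∀ k, f (k + 1) ≤ f k + (L * (α k) ^ 2 / 2) * (g k) ^ 2)
    (k₀ : ℕ) (hβ : ∀ k < k₀, β (k + 1) < η ^ 2 * L ^ 2) :
    f k₀ ≤ f 0 + η ^ 4 * L ^ 3 / (2 * (g 0) ^ 2) := by
  have hg0sq : 0 < g 0 ^ 2 := by positivity
  -- Every step size is at most the first one, η / |g 0|.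
  have hinc (k : ℕ) : f (k + 1) - f k ≤ L * η ^ 2 / (2 * g 0 ^ 2) * (β (k + 1) - β k) := by
    have hαk : α k ^ 2 ≤ η ^ 2 / g 0 ^ 2 := by
      rw [hα k]; exact div_sqrt_sq_le η hg0sq (sq_le_of_sum_sq hβ0 hrec k)
    calc f (k + 1) - f k ≤ L * α k ^ 2 / 2 * g k ^ 2 := by linarith [hdesc k]
      _ ≤ L * (η ^ 2 / g 0 ^ 2) / 2 * g k ^ 2 := by gcongr
      _ = L * η ^ 2 / (2 * g 0 ^ 2) * (β (k + 1) - β k) := by rw [hrec k]; ring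
  have hβk₀ : β k₀ ≤ η ^ 2 * L ^ 2 := by
    cases k₀ with
    | zero => rw [hβ0]; positivity
    | succ k => exact (hβ k k.lt_succ_self).le
  calc f k₀ ≤ f 0 + L * η ^ 2 / (2 * g 0 ^ 2) * (β k₀ - β 0) :=
        le_add_mul_sub_of_succ_sub_le hinc k₀
    _ ≤ f 0 + L * η ^ 2 / (2 * g 0 ^ 2) * (η ^ 2 * L ^ 2) := by rw [hβ0, sub_zero]; gcongr
    _ = f 0 + η ^ 4 * L ^ 3 / (2 * g 0 ^ 2) := by ring

theorem stmt_4 (β g f : ℕ → ℝ) (η L : ℝ) (hη : 0 < η) (hL : 0 < L)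
    (hg0 : g 0 ≠ 0) (hβ0 : β 0 = 0) (hrec : ∀ k, β (k + 1) = β k + (g k) ^ 2)
    (α : ℕ → ℝ) (hα : ∀ k, α k = η / Real.sqrt (β (k + 1)))
    (hdesc : ∀ k, f (k + 1) ≤ f k + (L * (α k) ^ 2 / 2) * (g k) ^ 2)
    (k₀ : ℕ) (hk₀ : 1 ≤ k₀) (hβ : ∀ k < k₀, β (k + 1) < η ^ 2 * L ^ 2) :
    f k₀ ≤ f 0 + η ^ 4 * L ^ 3 / (2 * (g 0) ^ 2) :=
  stmt_4_general β g f η L hL hg0 hβ0 hrec α hα hdesc k₀ hβ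
end

section
/- Let a, b > 0 and g(t) = a t⁴ − b t³ − (b³/a²) t with minimum value g* = −b⁴/a³. Then for all t ∈ ℝ with t ≠ b/a: (4a t³ − 3b t² − b³/a²)² / (g(t) − g*) = 9a²t⁴/(a t² + b t + b²/a) + (7a t² + b t + b²/a) ≥ 27b²/(28a). In particular, g satisfies a global Polyak–Łojasiewicz inequality with constant μ = 27b²/(28a). -/
/-!
Both the numerator and the denominator vanish to the right order at the minimiser `b / a`:
`g t - g* = (t - b/a)² Q` and `g' t = (t - b/a) P` with `Q = a t² + b t + b²/a` and
`P = Q + 3 a t²`, so the quotient is `P² / Q = 9 a² t⁴ / Q + Q + 6 a t²`. For the lower bound,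
substituting `u = a t` turns `28 a P² - 27 b² Q` into `a⁻¹` times the quartic
`448 u⁴ + 224 b u³ + 225 b² u² + 29 b³ u + b⁴`, which is a sum of squares.
-/

lemma quartic_sub_min_eq {a : ℝ} (ha : a ≠ 0) (b t : ℝ) :
    a * t ^ 4 - b * t ^ 3 - b ^ 3 / a ^ 2 * t - -b ^ 4 / a ^ 3
      = (t - b / a) ^ 2 * (a * t ^ 2 + b * t + b ^ 2 / a) := by
  field_simp
  ring

lemma quartic_deriv_eq {a : ℝ} (ha : a ≠ 0) (b t : ℝ) :
    4 * a * t ^ 3 - 3 * b * t ^ 2 - b ^ 3 / a ^ 2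
      = (t - b / a) * (4 * a * t ^ 2 + b * t + b ^ 2 / a) := by
  field_simp
  ring

lemma quadratic_pos {a b : ℝ} (ha : 0 < a) (hb : b ≠ 0) (t : ℝ) :
    0 < a * t ^ 2 + b * t + b ^ 2 / a := by
  have key : a * (a * t ^ 2 + b * t + b ^ 2 / a) = (a * t + b / 2) ^ 2 + 3 / 4 * b ^ 2 := by
    field_simp
    ring
  have : 0 < a * (a * t ^ 2 + b * t + b ^ 2 / a) := by
    rw [key]
    positivity
  exact pos_of_mul_pos_right this ha.le

lemma sq_add_div_self {q : ℝ} (hq : q ≠ 0) (c : ℝ) :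
    (q + c) ^ 2 / q = c ^ 2 / q + (q + 2 * c) := by
  field_simp
  ring

lemma quartic_sos (u b : ℝ) :
    27 * b ^ 2 * (u ^ 2 + b * u + b ^ 2) ≤ 28 * (4 * u ^ 2 + b * u + b ^ 2) ^ 2 := by
  nlinarith [sq_nonneg (29 * u ^ 2 + 58 * u * b + 4 * b ^ 2), sq_nonneg (55 * u ^ 2 + 2 * u * b),
    sq_nonneg (u ^ 2)]

lemma le_sq_div_quadratic {a b : ℝ} (ha : 0 < a) (hb : b ≠ 0) (t : ℝ) :
    27 * b ^ 2 / (28 * a)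
      ≤ (4 * a * t ^ 2 + b * t + b ^ 2 / a) ^ 2 / (a * t ^ 2 + b * t + b ^ 2 / a) := by
  have hQ := quadratic_pos ha hb t
  rw [div_le_div_iff₀ (by positivity) hQ]
  have key : a * ((4 * a * t ^ 2 + b * t + b ^ 2 / a) ^ 2 * (28 * a)
      - 27 * b ^ 2 * (a * t ^ 2 + b * t + b ^ 2 / a))
      = 28 * (4 * (a * t) ^ 2 + b * (a * t) + b ^ 2) ^ 2
        - 27 * b ^ 2 * ((a * t) ^ 2 + b * (a * t) + b ^ 2) := by
    field_simp
  have : 0 ≤ a * ((4 * a * t ^ 2 + b * t + b ^ 2 / a) ^ 2 * (28 * a)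
      - 27 * b ^ 2 * (a * t ^ 2 + b * t + b ^ 2 / a)) := by
    rw [key, sub_nonneg]
    exact quartic_sos (a * t) b
  exact sub_nonneg.mp (nonneg_of_mul_nonneg_right this ha)

theorem stmt_13 (a b : ℝ) (ha : 0 < a) (hb : 0 < b)
    (g : ℝ → ℝ) (hg : ∀ t, g t = a * t ^ 4 - b * t ^ 3 - (b ^ 3 / a ^ 2) * t)
    (gstar : ℝ) (hgstar : gstar = -b ^ 4 / a ^ 3) :
    ∀ t : ℝ, t ≠ b / a →
      (4 * a * t ^ 3 - 3 * b * t ^ 2 - b ^ 3 / a ^ 2) ^ 2 / (g t - gstar)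
          = 9 * a ^ 2 * t ^ 4 / (a * t ^ 2 + b * t + b ^ 2 / a)
            + (7 * a * t ^ 2 + b * t + b ^ 2 / a) ∧
        (4 * a * t ^ 3 - 3 * b * t ^ 2 - b ^ 3 / a ^ 2) ^ 2 / (g t - gstar)
          ≥ 27 * b ^ 2 / (28 * a) := by
  intro t ht
  have hdist : (t - b / a) ^ 2 ≠ 0 := pow_ne_zero 2 (sub_ne_zero.mpr ht)
  have hratio : (4 * a * t ^ 3 - 3 * b * t ^ 2 - b ^ 3 / a ^ 2) ^ 2 / (g t - gstar)
      = (4 * a * t ^ 2 + b * t + b ^ 2 / a) ^ 2 / (a * t ^ 2 + b * t + b ^ 2 / a) := by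
    rw [hg, hgstar, quartic_deriv_eq ha.ne', quartic_sub_min_eq ha.ne', mul_pow,
      mul_div_mul_left _ _ hdist]
  refine ⟨?_, hratio ▸ le_sq_div_quadratic ha hb.ne' t⟩
  have hP : 4 * a * t ^ 2 + b * t + b ^ 2 / a
      = (a * t ^ 2 + b * t + b ^ 2 / a) + 3 * a * t ^ 2 := by
    ring
  rw [hratio, hP, sq_add_div_self (quadratic_pos ha hb.ne' t).ne']
  ring
end

section
/- Let η, L, μ, ε > 0 and g_0 ≠ 0 with g_0² < η²L². Suppose β_0 = 0, β_{k+1} = β_k + g_k², g_k² ≥ μ(f_k − f*) with f_k ≥ f*, and β_{k+1} < η²L² for k = 0,…,T−1, and min_{0 ≤ k ≤ T−1}(f_k − f*) > ε. Then, using β_T = g_0² ∏_{k=1}^{T−1}(1 + g_k²/β_k), one obtains η²L² > g_0² (1 + με/(η²L²))^{T−1}, and hence T < 1 + (η²L²/(με) + 1) log(η²L²/g_0²). -/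
/-!
While `β k < η²L²`, each AdaGrad-Norm step adds `g_k² ≥ με`, which is at least the fraction
`με/(η²L²)` of the current `β k`. Hence `β` grows at least geometrically with ratio
`1 + με/(η²L²)` from `β 1 = g₀²`, and it cannot stay below `η²L²` for long. Taking logarithms
and using `log (1 + x) ≥ x / (1 + x)` turns the geometric bound into the bound on `T`.
-/

lemma one_add_div_mul_le_add {b A δ d : ℝ} (hA : 0 < A) (hbA : b ≤ A) (hδ : 0 ≤ δ)
    (hδd : δ ≤ d) : (1 + δ / A) * b ≤ b + d := by
  have : δ / A * b ≤ δ :=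
    calc δ / A * b ≤ δ / A * A := by gcongr
      _ = δ := div_mul_cancel₀ δ hA.ne'
  linarith

lemma div_one_add_le_log_one_add {x : ℝ} (hx : 0 ≤ x) : x / (1 + x) ≤ Real.log (1 + x) := by
  have h := Real.one_sub_inv_le_log_of_pos (by positivity : (0 : ℝ) < 1 + x)
  have : 1 - (1 + x)⁻¹ = x / (1 + x) := by field_simp; ring
  linarith

lemma lt_one_div_add_one_mul_log_of_mul_pow_lt {a b x : ℝ} (n : ℕ) (ha : 0 < a) (hx : 0 < x)
    (h : a * (1 + x) ^ n < b) : (n : ℝ) < (1 / x + 1) * Real.log (b / a) := by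
  have hlog : n * Real.log (1 + x) < Real.log (b / a) := by
    rw [← Real.log_pow]
    exact Real.log_lt_log (by positivity) (by rwa [lt_div_iff₀ ha, mul_comm])
  have hn : n * (x / (1 + x)) < Real.log (b / a) :=
    (mul_le_mul_of_nonneg_left (div_one_add_le_log_one_add hx.le) n.cast_nonneg).trans_lt hlog
  have hratio : 1 / x + 1 = (x / (1 + x))⁻¹ := by field_simp
  rw [hratio, inv_mul_eq_div, lt_div_iff₀ (by positivity)]
  exact hn

theorem stmt_19_general (β g f : ℕ → ℝ) (fstar η L μ ε : ℝ)
    (hμ : 0 < μ) (hε : 0 < ε)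
    (hg0 : g 0 ≠ 0) (hg0small : (g 0) ^ 2 < η ^ 2 * L ^ 2)
    (hβ0 : β 0 = 0) (hrec : ∀ k, β (k + 1) = β k + (g k) ^ 2)
    (hPL : ∀ k, μ * (f k - fstar) ≤ (g k) ^ 2)
    (T : ℕ)
    (hβ : ∀ k < T, β (k + 1) < η ^ 2 * L ^ 2)
    (hmin : ∀ k < T, ε < f k - fstar) :
    η ^ 2 * L ^ 2 > (g 0) ^ 2 * (1 + μ * ε / (η ^ 2 * L ^ 2)) ^ (T - 1) ∧
      (T : ℝ) < 1 + (η ^ 2 * L ^ 2 / (μ * ε) + 1)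
        * Real.log (η ^ 2 * L ^ 2 / (g 0) ^ 2) := by
  have hg0sq : 0 < g 0 ^ 2 := by positivity
  have hA : 0 < η ^ 2 * L ^ 2 := hg0sq.trans hg0small
  have hgrad : ∀ k < T, μ * ε ≤ g k ^ 2 := fun k hk =>
    (mul_lt_mul_of_pos_left (hmin k hk) hμ).le.trans (hPL k)
  have hgrowth : g 0 ^ 2 * (1 + μ * ε / (η ^ 2 * L ^ 2)) ^ (T - 1) < η ^ 2 * L ^ 2 := by
    cases T with
    | zero => simpa using hg0small
    | succ n =>
      calc g 0 ^ 2 * (1 + μ * ε / (η ^ 2 * L ^ 2)) ^ (n + 1 - 1)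
          = (1 + μ * ε / (η ^ 2 * L ^ 2)) ^ n * β (0 + 1) := by
            rw [zero_add, hrec, hβ0, zero_add, Nat.add_sub_cancel, mul_comm]
        _ ≤ β (n + 1) := geom_le (u := fun k => β (k + 1)) (by positivity) n fun k hk => by
            rw [hrec (k + 1)]
            exact one_add_div_mul_le_add hA (hβ k (by omega)).le (by positivity)
              (hgrad (k + 1) (by omega))
        _ < η ^ 2 * L ^ 2 := hβ n n.lt_succ_self
  refine ⟨hgrowth, ?_⟩
  have hbound := lt_one_div_add_one_mul_log_of_mul_pow_lt (T - 1) hg0sq (by positivity) hgrowth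
  rw [one_div_div] at hbound
  have hT : (T : ℝ) ≤ ((T - 1 : ℕ) : ℝ) + 1 := by exact_mod_cast (by omega : T ≤ T - 1 + 1)
  linarith

theorem stmt_19 (β g f : ℕ → ℝ) (fstar η L μ ε : ℝ)
    (hη : 0 < η) (hL : 0 < L) (hμ : 0 < μ) (hε : 0 < ε)
    (hg0 : g 0 ≠ 0) (hg0small : (g 0) ^ 2 < η ^ 2 * L ^ 2)
    (hβ0 : β 0 = 0) (hrec : ∀ k, β (k + 1) = β k + (g k) ^ 2)
    (hPL : ∀ k, μ * (f k - fstar) ≤ (g k) ^ 2) (hf : ∀ k, fstar ≤ f k)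
    (T : ℕ) (hT1 : 1 ≤ T)
    (hβ : ∀ k < T, β (k + 1) < η ^ 2 * L ^ 2)
    (hmin : ∀ k < T, ε < f k - fstar) :
    η ^ 2 * L ^ 2 > (g 0) ^ 2 * (1 + μ * ε / (η ^ 2 * L ^ 2)) ^ (T - 1) ∧
      (T : ℝ) < 1 + (η ^ 2 * L ^ 2 / (μ * ε) + 1)
        * Real.log (η ^ 2 * L ^ 2 / (g 0) ^ 2) :=
  stmt_19_general β g f fstar η L μ ε hμ hε hg0 hg0small hβ0 hrec hPL T hβ hmin
end
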